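/- Let S be a K-algebra with a pseudo-degree function χ and let a ∈ S with χ(a) = m > 0 be such that C_S(a) satisfies condition D(1). Then C_S(a) is a commutative subalgebra of S. -/

import Mathlib

open Polynomial

/-- A pseudo-degree function on a ring `S`: a valuation-like map
`χ : S → ℤ ∪ {-∞}` with `χ a = -∞ ↔ a = 0`, `χ (ab) = χ a + χ b` and
`χ (a+b) ≤ max (χ a) (χ b)`. -/
structure IsPseudoDegree {S : Type*} [Ring S] (χ : S → WithBot ℤ) : Prop where
  eq_bot_iff : ∀ a : S, χ a = ⊥ ↔ a = 0
  map_mul : ∀ a b : S, χ (a * b) = χ a + χ b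
  add_le : ∀ a b : S, χ (a + b) ≤ max (χ a) (χ b)

/-- Condition `D(ℓ)` for a subalgebra `B` of `S`: every nonzero element of `B`
has `χ`-value `≥ 0`, and any `ℓ+1` elements of `B` all mapped to the same
integer by `χ` admit a nontrivial `K`-linear combination of strictly smaller
`χ`-value. -/
def CondD {K S : Type*} [Field K] [Ring S] [Algebra K S] (χ : S → WithBot ℤ)
    (B : Subalgebra K S) (ℓ : ℕ) : Prop :=
  (∀ b ∈ B, b ≠ 0 → 0 ≤ χ b) ∧
  ∀ b : Fin (ℓ + 1) → S, (∀ i, b i ∈ B) → (∀ i, χ (b i) = χ (b 0)) → χ (b 0) ≠ ⊥ →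
    ∃ α : Fin (ℓ + 1) → K, α ≠ 0 ∧ χ (∑ i, α i • b i) < χ (b 0)

/-!
Let `B` be a subalgebra satisfying `D(1)`: its nonzero elements have degree `≥ 0`, and two of
them of equal degree agree up to a scalar modulo lower degree. Hence for nonzero `x, y ∈ B` there
is a scalar `p x y` with `x * y ≡ p x y • (y * x)` modulo lower degree; it depends only on the
degrees, is multiplicative in each variable, and `p x x = 1`. Such a pairing is trivial: `x ^ (deg y / g)` and `y ^ (deg x / g)`
have the same degree, so `p x y` is killed by two coprime exponents. Thus commutators drop the
degree by at least `1`.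

If commutators drop the degree by at least `σ ≥ 1`, and `x₀, y₀` attain exactly `σ`, then the
leading coefficient of `x₀ * y₀ * ⁅x, y⁆` against `⁅x₀, y₀⁆ * (x * y)` is an additive pairing of the
same kind, hence zero; but it is `1` at `(x₀, y₀)`. So the drop is unbounded, and as commutators
lie in `B`, where degrees are `≥ 0`, they vanish.
-/

section Pairing

variable {M A : Type*} [Monoid M] [CommMonoid A] {f : M → M → A}

theorem pairing_pow_left (map_mul_left : ∀ x x' y, f (x * x') y = f x y * f x' y)
    (mul_swap : ∀ x y, f x y * f y x = 1) (x y : M) (n : ℕ) : f (x ^ n) y = f x y ^ n := by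
  induction n with
  | zero =>
    have h := map_mul_left 1 1 y
    rw [one_mul] at h
    calc f (x ^ 0) y = f 1 y * (f 1 y * f y 1) := by rw [mul_swap, mul_one, pow_zero]
      _ = 1 := by rw [← mul_assoc, ← h, mul_swap]
      _ = f x y ^ 0 := (pow_zero _).symm
  | succ n ih => rw [pow_succ, map_mul_left, ih, pow_succ]

/-- Comparing `x ^ (deg y / g)` with `y ^ (deg x / g)`, where `g = gcd (deg x) (deg y)`, shows
that `f x y` is killed by two coprime exponents. -/
theorem alternating_pairing_eq_one {deg : M → ℕ} (deg_mul : ∀ x y, deg (x * y) = deg x + deg y)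
    (map_mul_left : ∀ x x' y, f (x * x') y = f x y * f x' y)
    (congr_left : ∀ x x' y, deg x = deg x' → f x y = f x' y)
    (mul_swap : ∀ x y, f x y * f y x = 1) (map_self : ∀ x, f x x = 1) (x y : M) :
    f x y = 1 := by
  have deg_pow (z : M) (n : ℕ) : deg (z ^ n) = n * deg z := by
    induction n with
    | zero => simpa using deg_mul 1 1
    | succ n ih => rw [pow_succ, deg_mul, ih, Nat.succ_mul]
  have key (x y : M) : f x y ^ (deg y / (deg x).gcd (deg y)) = 1 := by
    have hdeg :
        deg (x ^ (deg y / (deg x).gcd (deg y))) = deg (y ^ (deg x / (deg x).gcd (deg y))) := by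
      rw [deg_pow, deg_pow, Nat.div_mul_right_comm (Nat.gcd_dvd_right _ _),
        Nat.div_mul_right_comm (Nat.gcd_dvd_left _ _), mul_comm]
    rw [← pairing_pow_left map_mul_left mul_swap, congr_left _ _ _ hdeg,
      pairing_pow_left map_mul_left mul_swap, map_self, one_pow]
  rcases Nat.eq_zero_or_pos ((deg x).gcd (deg y)) with hg | hg
  · obtain ⟨hx, hy⟩ := Nat.gcd_eq_zero_iff.1 hg
    rw [congr_left x y y (hx.trans hy.symm), map_self]
  · have hyx := key y x
    rw [Nat.gcd_comm] at hyx
    have hxy : f x y ^ (deg x / (deg x).gcd (deg y)) = 1 := by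
      calc _ = f x y ^ _ * f y x ^ _ := by rw [hyx, mul_one]
        _ = 1 := by rw [← mul_pow, mul_swap, one_pow]
    exact (pow_eq_one_iff_of_coprime (Nat.coprime_div_gcd_div_gcd hg)).1 ⟨hxy, key x y⟩

end Pairing

theorem WithBot.add_one_le_of_lt {a b : WithBot ℤ} (h : a < b) : a + 1 ≤ b := by
  induction a <;> induction b <;> simp_all
  norm_cast at *

namespace IsPseudoDegree

variable {S : Type*} [Ring S] {χ : S → WithBot ℤ} (hχ : IsPseudoDegree χ)
include hχ

theorem map_zero : χ 0 = ⊥ := (hχ.eq_bot_iff 0).2 rfl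

theorem ne_bot {x : S} (hx : x ≠ 0) : χ x ≠ ⊥ := fun h => hx ((hχ.eq_bot_iff x).1 h)

theorem exists_eq_coe {x : S} (hx : x ≠ 0) : ∃ n : ℤ, χ x = n :=
  (WithBot.ne_bot_iff_exists.1 (hχ.ne_bot hx)).imp fun _ => Eq.symm

theorem mul_ne_zero {x y : S} (hx : x ≠ 0) (hy : y ≠ 0) : x * y ≠ 0 := by
  rw [Ne, ← hχ.eq_bot_iff, hχ.map_mul, WithBot.add_eq_bot, not_or]
  exact ⟨hχ.ne_bot hx, hχ.ne_bot hy⟩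

theorem map_mul_comm (x y : S) : χ (x * y) = χ (y * x) := by
  rw [hχ.map_mul, hχ.map_mul, add_comm]

theorem map_one [Nontrivial S] : χ 1 = 0 := by
  obtain ⟨n, hn⟩ := hχ.exists_eq_coe one_ne_zero
  have h := hχ.map_mul 1 1
  rw [mul_one, hn] at h
  rw [hn, show n = 0 by norm_cast at h; omega]
  rfl

theorem map_neg (x : S) : χ (-x) = χ x := by
  rcases subsingleton_or_nontrivial S with hS | hS
  · rw [Subsingleton.elim (-x) x]
  obtain ⟨n, hn⟩ := hχ.exists_eq_coe (neg_ne_zero.2 (one_ne_zero' S))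
  have h := hχ.map_mul (-1) (-1)
  rw [neg_mul_neg, mul_one, hχ.map_one, hn] at h
  rw [← neg_one_mul, hχ.map_mul, hn, show n = 0 by norm_cast at h; omega]
  exact zero_add _

theorem map_add_lt {x y : S} {d : WithBot ℤ} (hx : χ x < d) (hy : χ y < d) : χ (x + y) < d :=
  (hχ.add_le x y).trans_lt (max_lt hx hy)

theorem map_sub_lt {x y : S} {d : WithBot ℤ} (hx : χ x < d) (hy : χ y < d) : χ (x - y) < d := by
  rw [sub_eq_add_neg]
  exact hχ.map_add_lt hx (by rwa [hχ.map_neg])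

theorem map_mul_lt_map_mul_left {x y z : S} (hz : z ≠ 0) (h : χ x < χ y) :
    χ (z * x) < χ (z * y) := by
  rw [hχ.map_mul, hχ.map_mul]
  exact WithBot.add_lt_add_left (hχ.ne_bot hz) h

theorem map_mul_lt_map_mul_right {x y z : S} (hz : z ≠ 0) (h : χ x < χ y) :
    χ (x * z) < χ (y * z) := by
  rw [hχ.map_mul, hχ.map_mul]
  exact WithBot.add_lt_add_right (hχ.ne_bot hz) h

theorem map_mul_lt_map_mul {x x' y y' : S} (hx' : x' ≠ 0) (hx : χ x ≤ χ x') (hy : χ y < χ y') :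
    χ (x * y) < χ (x' * y') := by
  rw [hχ.map_mul, hχ.map_mul]
  rcases eq_or_ne (χ x) ⊥ with hx0 | hx0
  · rw [hx0, WithBot.bot_add, bot_lt_iff_ne_bot, Ne, WithBot.add_eq_bot, not_or]
    exact ⟨hχ.ne_bot hx', hy.ne_bot⟩
  · exact WithBot.add_lt_add_of_le_of_lt hx0 hx hy

end IsPseudoDegree

open Classical in
noncomputable def leadCoeff (K : Type*) {S : Type*} [Zero K] [Ring S] [SMul K S]
    (χ : S → WithBot ℤ) (r u : S) : K :=
  if h : ∃ c : K, χ (u - c • r) < χ r then h.choose else 0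

noncomputable def swapCoeff (K : Type*) {S : Type*} [Zero K] [Ring S] [SMul K S]
    (χ : S → WithBot ℤ) (x y : S) : K :=
  leadCoeff K χ (y * x) (x * y)

noncomputable def bracketCoeff (K : Type*) {S : Type*} [Zero K] [Ring S] [SMul K S]
    (χ : S → WithBot ℤ) (w r x y : S) : K :=
  leadCoeff K χ (r * (x * y)) (w * ⁅x, y⁆)

def CommutatorDrop {S : Type*} [Ring S] (χ : S → WithBot ℤ) (B : Set S) (σ : ℕ) : Prop :=
  ∀ x ∈ B, ∀ y ∈ B, χ ⁅x, y⁆ + (σ : ℤ) ≤ χ x + χ y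

theorem CommutatorDrop.lt {S : Type*} [Ring S] {χ : S → WithBot ℤ} {B : Set S} {σ : ℕ}
    (h : CommutatorDrop χ B σ) (hχ : IsPseudoDegree χ) (hσ : 0 < σ) {x y : S} (hx : x ∈ B)
    (hy : y ∈ B) (hx0 : x ≠ 0) (hy0 : y ≠ 0) : χ ⁅x, y⁆ < χ (x * y) := by
  obtain ⟨n, hn⟩ := hχ.exists_eq_coe (hχ.mul_ne_zero hx0 hy0)
  have hle := h x hx y hy
  rw [← hχ.map_mul, hn] at hle
  rw [hn]
  rcases eq_or_ne (χ ⁅x, y⁆) ⊥ with h0 | h0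
  · rw [h0]
    exact WithBot.bot_lt_coe n
  obtain ⟨c, hc⟩ := WithBot.ne_bot_iff_exists.1 h0
  rw [← hc] at hle ⊢
  norm_cast at hle ⊢
  omega

theorem Subalgebra.lie_mem {R S : Type*} [CommRing R] [Ring S] [Algebra R S]
    (B : Subalgebra R S) {x y : S} (hx : x ∈ B) (hy : y ∈ B) : ⁅x, y⁆ ∈ B := by
  rw [Ring.lie_def]
  exact sub_mem (mul_mem hx hy) (mul_mem hy hx)

namespace IsPseudoDegree

variable {K S : Type*} [Field K] [Ring S] [Algebra K S] {χ : S → WithBot ℤ}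
  (hχ : IsPseudoDegree χ) {B : Subalgebra K S}
include hχ

section Nonneg

variable (hB : ∀ b ∈ B, b ≠ 0 → 0 ≤ χ b)
include hB

theorem map_smul {c : K} (hc : c ≠ 0) (x : S) : χ (c • x) = χ x := by
  rcases subsingleton_or_nontrivial S with hS | hS
  · rw [Subsingleton.elim (c • x) x]
  have hnonneg {c : K} (hc : c ≠ 0) : 0 ≤ χ (algebraMap K S c) :=
    hB _ (B.algebraMap_mem c) ((_root_.map_ne_zero _).2 hc)
  have hsum : χ (algebraMap K S c) + χ (algebraMap K S c⁻¹) = 0 := by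
    rw [← hχ.map_mul, ← _root_.map_mul, mul_inv_cancel₀ hc, _root_.map_one, hχ.map_one]
  rw [Algebra.smul_def, hχ.map_mul,
    ((add_eq_zero_iff_of_nonneg (hnonneg hc) (hnonneg (inv_ne_zero hc))).1 hsum).1, zero_add]

theorem map_smul_le (c : K) (x : S) : χ (c • x) ≤ χ x := by
  rcases eq_or_ne c 0 with rfl | hc
  · rw [zero_smul, hχ.map_zero]
    exact bot_le
  · rw [hχ.map_smul hB hc]

theorem eq_zero_of_map_smul_lt {c : K} {x : S} (h : χ (c • x) < χ x) : c = 0 := by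
  by_contra hc
  rw [hχ.map_smul hB hc] at h
  exact h.false

theorem leadCoeff_eq {r u : S} {c : K} (h : χ (u - c • r) < χ r) : leadCoeff K χ r u = c := by
  have hex : ∃ c : K, χ (u - c • r) < χ r := ⟨c, h⟩
  have hspec : χ (u - leadCoeff K χ r u • r) < χ r := by
    rw [leadCoeff, dif_pos hex]
    exact hex.choose_spec
  refine (sub_eq_zero.1 (hχ.eq_zero_of_map_smul_lt hB (x := r) ?_)).symm
  rw [sub_smul, show c • r - leadCoeff K χ r u • r = (u - leadCoeff K χ r u • r) - (u - c • r) by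
    abel]
  exact hχ.map_sub_lt hspec h

theorem alternating_pairing_eq_one_of_mem {A : Type*} [CommMonoid A] {f : S → S → A}
    (map_mul_left : ∀ ⦃x x' y⦄, x ∈ B → x' ∈ B → y ∈ B → x ≠ 0 → x' ≠ 0 → y ≠ 0 →
      f (x * x') y = f x y * f x' y)
    (congr_left : ∀ ⦃x x' y⦄, x ∈ B → x' ∈ B → y ∈ B → x ≠ 0 → y ≠ 0 → χ x = χ x' →
      f x y = f x' y)
    (mul_swap : ∀ ⦃x y⦄, x ∈ B → y ∈ B → x ≠ 0 → y ≠ 0 → f x y * f y x = 1)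
    (map_self : ∀ ⦃x⦄, x ≠ 0 → f x x = 1)
    {x y : S} (hx : x ∈ B) (hy : y ∈ B) (hx0 : x ≠ 0) (hy0 : y ≠ 0) : f x y = 1 := by
  have : Nontrivial S := ⟨⟨x, 0, hx0⟩⟩
  let M : Submonoid S :=
    { carrier := {z | z ∈ B ∧ z ≠ 0}
      mul_mem' := fun ha hb => ⟨mul_mem ha.1 hb.1, hχ.mul_ne_zero ha.2 hb.2⟩
      one_mem' := ⟨one_mem B, one_ne_zero⟩ }
  let deg : M → ℕ := fun z => ((χ z).unbotD 0).toNat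
  have hdeg (z : M) : χ z = ((deg z : ℤ) : WithBot ℤ) := by
    obtain ⟨n, hn⟩ := hχ.exists_eq_coe z.2.2
    have hn0 := hB z z.2.1 z.2.2
    rw [hn] at hn0 ⊢
    simp only [deg, hn, WithBot.unbotD_coe, Int.toNat_of_nonneg (WithBot.coe_nonneg.1 hn0)]
  refine alternating_pairing_eq_one (M := M) (f := fun z z' => f z z') (deg := deg)
    (fun z z' => ?_) (fun z z' w => map_mul_left z.2.1 z'.2.1 w.2.1 z.2.2 z'.2.2 w.2.2)
    (fun z z' w h => congr_left z.2.1 z'.2.1 w.2.1 z.2.2 w.2.2 (by rw [hdeg, hdeg, h]))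
    (fun z w => mul_swap z.2.1 w.2.1 z.2.2 w.2.2) (fun z => map_self z.2.2)
    ⟨x, hx, hx0⟩ ⟨y, hy, hy0⟩
  have h := hdeg (z * z')
  rw [Submonoid.coe_mul, hχ.map_mul, hdeg, hdeg] at h
  exact_mod_cast h.symm

end Nonneg

section CommutatorDrop

variable {σ : ℕ} (hdrop : CommutatorDrop χ B σ) {w r x y : S} (hwr : χ w = χ r + (σ : ℤ))
include hdrop hwr

theorem map_mul_lie_le (hx : x ∈ B) (hy : y ∈ B) : χ (w * ⁅x, y⁆) ≤ χ (r * (x * y)) := by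
  rw [hχ.map_mul, hχ.map_mul, hχ.map_mul, hwr, add_assoc, add_comm _ (χ ⁅x, y⁆)]
  exact add_le_add le_rfl (hdrop x hx y hy)

theorem map_lie_le (hw : w ∈ B) (hx : x ∈ B) : χ ⁅w, x⁆ ≤ χ (r * x) := by
  have h := hdrop w hw x hx
  rw [hwr, add_right_comm, ← hχ.map_mul] at h
  exact WithBot.le_of_add_le_add_right (WithBot.coe_ne_bot) h

end CommutatorDrop

variable (hD : CondD χ B 1)
include hD

theorem exists_sub_smul_lt {r u : S} (hr : r ∈ B) (hu : u ∈ B) (hr0 : r ≠ 0) (hle : χ u ≤ χ r) :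
    ∃ c : K, χ (u - c • r) < χ r := by
  rcases hle.lt_or_eq with hlt | heq
  · exact ⟨0, by rwa [zero_smul, sub_zero]⟩
  obtain ⟨α, hα, hlt⟩ := hD.2 ![u, r] (by simp [Fin.forall_fin_two, hu, hr])
    (by simp [Fin.forall_fin_two, heq]) (by simpa [heq] using hχ.ne_bot hr0)
  simp only [Nat.reduceAdd, Fin.sum_univ_succ, Matrix.cons_val_zero, Finset.univ_unique,
    Fin.default_eq_zero, Matrix.cons_val_succ, Matrix.cons_val_fin_one, Finset.sum_singleton,
    Fin.succ_zero_eq_one] at hlt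
  have hα0 : α 0 ≠ 0 := by
    intro h0
    have h1 : α 1 ≠ 0 := fun h1 => hα (by ext i; fin_cases i <;> simp [h0, h1])
    rw [h0, zero_smul, zero_add, hχ.map_smul hD.1 h1, heq] at hlt
    exact hlt.false
  refine ⟨-((α 0)⁻¹ * α 1), ?_⟩
  rw [show u - -((α 0)⁻¹ * α 1) • r = (α 0)⁻¹ • (α 0 • u + α 1 • r) by
      rw [smul_add, smul_smul, inv_mul_cancel₀ hα0, one_smul, smul_smul, neg_smul, sub_neg_eq_add],
    hχ.map_smul hD.1 (inv_ne_zero hα0), ← heq]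
  exact hlt

theorem sub_leadCoeff_smul_lt {r u : S} (hr : r ∈ B) (hu : u ∈ B) (hr0 : r ≠ 0)
    (hle : χ u ≤ χ r) : χ (u - leadCoeff K χ r u • r) < χ r := by
  obtain ⟨c, hc⟩ := hχ.exists_sub_smul_lt hD hr hu hr0 hle
  rwa [hχ.leadCoeff_eq hD.1 hc]

section SwapCoeff

variable {x x' y : S}

theorem sub_swapCoeff_smul_lt (hx : x ∈ B) (hy : y ∈ B) (hx0 : x ≠ 0) (hy0 : y ≠ 0) :
    χ (x * y - swapCoeff K χ x y • (y * x)) < χ (y * x) :=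
  hχ.sub_leadCoeff_smul_lt hD (mul_mem hy hx) (mul_mem hx hy) (hχ.mul_ne_zero hy0 hx0)
    (hχ.map_mul_comm x y).le

theorem swapCoeff_self (hx0 : x ≠ 0) : swapCoeff K χ x x = 1 := by
  refine hχ.leadCoeff_eq hD.1 ?_
  rw [one_smul, sub_self, hχ.map_zero, bot_lt_iff_ne_bot]
  exact hχ.ne_bot (hχ.mul_ne_zero hx0 hx0)

theorem swapCoeff_mul_swapCoeff (hx : x ∈ B) (hy : y ∈ B) (hx0 : x ≠ 0) (hy0 : y ≠ 0) :
    swapCoeff K χ x y * swapCoeff K χ y x = 1 := by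
  set p := swapCoeff K χ x y
  set q := swapCoeff K χ y x
  refine (sub_eq_zero.1 (hχ.eq_zero_of_map_smul_lt hD.1 (x := x * y) ?_)).symm
  rw [show (1 - p * q) • (x * y) = (x * y - p • (y * x)) + p • (y * x - q • (x * y)) by module]
  refine hχ.map_add_lt ?_ ((hχ.map_smul_le hD.1 _ _).trans_lt ?_)
  · rw [hχ.map_mul_comm x y]
    exact hχ.sub_swapCoeff_smul_lt hD hx hy hx0 hy0
  · exact hχ.sub_swapCoeff_smul_lt hD hy hx hy0 hx0

theorem swapCoeff_mul_left (hx : x ∈ B) (hx' : x' ∈ B) (hy : y ∈ B) (hx0 : x ≠ 0)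
    (hx'0 : x' ≠ 0) (hy0 : y ≠ 0) :
    swapCoeff K χ (x * x') y = swapCoeff K χ x y * swapCoeff K χ x' y := by
  set p := swapCoeff K χ x y
  set p' := swapCoeff K χ x' y
  refine hχ.leadCoeff_eq hD.1 ?_
  rw [show x * x' * y - (p * p') • (y * (x * x'))
      = x * (x' * y - p' • (y * x')) + p' • ((x * y - p • (y * x)) * x') by
    simp only [mul_sub, sub_mul, mul_smul_comm, smul_mul_assoc, smul_sub, smul_smul, mul_assoc,
      mul_comm p p']
    abel]
  refine hχ.map_add_lt ?_ ((hχ.map_smul_le hD.1 _ _).trans_lt ?_)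
  · calc χ (x * (x' * y - p' • (y * x'))) < χ (x * (y * x')) :=
          hχ.map_mul_lt_map_mul_left hx0 (hχ.sub_swapCoeff_smul_lt hD hx' hy hx'0 hy0)
      _ = χ (y * (x * x')) := by simp only [hχ.map_mul]; ac_rfl
  · calc χ ((x * y - p • (y * x)) * x') < χ (y * x * x') :=
          hχ.map_mul_lt_map_mul_right hx'0 (hχ.sub_swapCoeff_smul_lt hD hx hy hx0 hy0)
      _ = χ (y * (x * x')) := by rw [mul_assoc]

theorem swapCoeff_congr_left (hx : x ∈ B) (hx' : x' ∈ B) (hy : y ∈ B) (hx0 : x ≠ 0)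
    (hy0 : y ≠ 0) (hdeg : χ x = χ x') : swapCoeff K χ x y = swapCoeff K χ x' y := by
  set p := swapCoeff K χ x y
  set c := leadCoeff K χ x x'
  have hv : χ (x' - c • x) < χ x := hχ.sub_leadCoeff_smul_lt hD hx hx' hx0 hdeg.ge
  refine (hχ.leadCoeff_eq hD.1 ?_).symm
  rw [show x' * y - p • (y * x')
      = c • (x * y - p • (y * x)) + ((x' - c • x) * y - p • (y * (x' - c • x))) by
    simp only [mul_sub, sub_mul, mul_smul_comm, smul_mul_assoc, smul_sub, smul_smul, mul_comm p c]
    abel,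
    show χ (y * x') = χ (y * x) by rw [hχ.map_mul, hχ.map_mul, hdeg]]
  refine hχ.map_add_lt ((hχ.map_smul_le hD.1 _ _).trans_lt
    (hχ.sub_swapCoeff_smul_lt hD hx hy hx0 hy0)) (hχ.map_sub_lt ?_
    ((hχ.map_smul_le hD.1 _ _).trans_lt (hχ.map_mul_lt_map_mul_left hy0 hv)))
  rw [hχ.map_mul_comm y x]
  exact hχ.map_mul_lt_map_mul_right hy0 hv

theorem swapCoeff_eq_one (hx : x ∈ B) (hy : y ∈ B) (hx0 : x ≠ 0) (hy0 : y ≠ 0) :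
    swapCoeff K χ x y = 1 :=
  hχ.alternating_pairing_eq_one_of_mem hD.1
    (fun _ _ _ hx hx' hy hx0 hx'0 hy0 => hχ.swapCoeff_mul_left hD hx hx' hy hx0 hx'0 hy0)
    (fun _ _ _ hx hx' hy hx0 hy0 => hχ.swapCoeff_congr_left hD hx hx' hy hx0 hy0)
    (fun _ _ hx hy hx0 hy0 => hχ.swapCoeff_mul_swapCoeff hD hx hy hx0 hy0)
    (fun _ hx0 => hχ.swapCoeff_self hD hx0) hx hy hx0 hy0

theorem commutatorDrop_one : CommutatorDrop χ B 1 := by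
  intro x hx y hy
  rcases eq_or_ne x 0 with rfl | hx0
  · simp [Ring.lie_def, hχ.map_zero]
  rcases eq_or_ne y 0 with rfl | hy0
  · simp [Ring.lie_def, hχ.map_zero]
  have h := hχ.sub_swapCoeff_smul_lt hD hx hy hx0 hy0
  rw [hχ.swapCoeff_eq_one hD hx hy hx0 hy0, one_smul, hχ.map_mul_comm, hχ.map_mul] at h
  rw [Ring.lie_def]
  exact_mod_cast WithBot.add_one_le_of_lt h

end SwapCoeff

section BracketCoeff

variable {σ : ℕ} (hdrop : CommutatorDrop χ B σ) {w r x x' y : S} (hwr : χ w = χ r + (σ : ℤ))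
  (hr : r ∈ B) (hr0 : r ≠ 0)
include hdrop hwr hr hr0

theorem sub_bracketCoeff_smul_lt (hw : w ∈ B) (hx : x ∈ B) (hy : y ∈ B) (hx0 : x ≠ 0)
    (hy0 : y ≠ 0) :
    χ (w * ⁅x, y⁆ - bracketCoeff K χ w r x y • (r * (x * y))) < χ (r * (x * y)) :=
  hχ.sub_leadCoeff_smul_lt hD (mul_mem hr (mul_mem hx hy)) (mul_mem hw (B.lie_mem hx hy))
    (hχ.mul_ne_zero hr0 (hχ.mul_ne_zero hx0 hy0)) (hχ.map_mul_lie_le hdrop hwr hx hy)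

omit hdrop hwr hr in
theorem bracketCoeff_self (hx0 : x ≠ 0) : bracketCoeff K χ w r x x = 0 := by
  refine hχ.leadCoeff_eq hD.1 ?_
  rw [zero_smul, sub_zero, Ring.lie_def, sub_self, mul_zero, hχ.map_zero, bot_lt_iff_ne_bot]
  exact hχ.ne_bot (hχ.mul_ne_zero hr0 (hχ.mul_ne_zero hx0 hx0))

theorem bracketCoeff_add_swap (hσ : 0 < σ) (hw : w ∈ B) (hx : x ∈ B) (hy : y ∈ B) (hx0 : x ≠ 0)
    (hy0 : y ≠ 0) : bracketCoeff K χ w r x y + bracketCoeff K χ w r y x = 0 := by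
  set g := bracketCoeff K χ w r x y
  rw [← neg_eq_iff_add_eq_zero]
  refine (hχ.leadCoeff_eq hD.1 ?_).symm
  rw [show w * ⁅y, x⁆ - (-g) • (r * (y * x))
      = -(w * ⁅x, y⁆ - g • (r * (x * y))) - g • (r * ⁅x, y⁆) by
    simp only [Ring.lie_def, mul_sub, smul_sub, neg_smul]
    abel, hχ.map_mul r (y * x), hχ.map_mul_comm y x, ← hχ.map_mul]
  refine hχ.map_sub_lt ?_ ((hχ.map_smul_le hD.1 _ _).trans_lt ?_)
  · rw [hχ.map_neg]
    exact hχ.sub_bracketCoeff_smul_lt hD hdrop hwr hr hr0 hw hx hy hx0 hy0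
  · exact hχ.map_mul_lt_map_mul_left hr0 (hdrop.lt hχ hσ hx hy hx0 hy0)

theorem bracketCoeff_mul_left (hσ : 0 < σ) (hw : w ∈ B) (hx : x ∈ B) (hx' : x' ∈ B) (hy : y ∈ B)
    (hx0 : x ≠ 0) (hx'0 : x' ≠ 0) (hy0 : y ≠ 0) :
    bracketCoeff K χ w r (x * x') y = bracketCoeff K χ w r x y + bracketCoeff K χ w r x' y := by
  set g := bracketCoeff K χ w r x y
  set g' := bracketCoeff K χ w r x' y
  refine hχ.leadCoeff_eq hD.1 ?_
  -- `⁅x * x', y⁆ = x * ⁅x', y⁆ + ⁅x, y⁆ * x'`, plus the commutators that move `x` past `w` and `r`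
  -- and `y` past `x'`; each of these lowers the degree by `σ`.
  rw [show w * ⁅x * x', y⁆ - (g + g') • (r * (x * x' * y))
      = x * (w * ⁅x', y⁆ - g' • (r * (x' * y))) + (w * ⁅x, y⁆ - g • (r * (x * y))) * x'
        + ⁅w, x⁆ * ⁅x', y⁆ + g' • (⁅x, r⁆ * (x' * y)) + g • (r * (x * ⁅y, x'⁆)) by
    simp only [Ring.lie_def, mul_sub, sub_mul, mul_smul_comm, smul_mul_assoc, smul_sub, add_smul,
      mul_assoc]
    abel]
  refine hχ.map_add_lt (hχ.map_add_lt (hχ.map_add_lt (hχ.map_add_lt ?_ ?_) ?_) ?_) ?_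
  · refine (hχ.map_mul_lt_map_mul_left hx0
      (hχ.sub_bracketCoeff_smul_lt hD hdrop hwr hr hr0 hw hx' hy hx'0 hy0)).trans_eq ?_
    simp only [hχ.map_mul]
    ac_rfl
  · refine (hχ.map_mul_lt_map_mul_right hx'0
      (hχ.sub_bracketCoeff_smul_lt hD hdrop hwr hr hr0 hw hx hy hx0 hy0)).trans_eq ?_
    simp only [hχ.map_mul]
    ac_rfl
  · refine (hχ.map_mul_lt_map_mul (hχ.mul_ne_zero hr0 hx0) (hχ.map_lie_le hdrop hwr hw hx)
      (hdrop.lt hχ hσ hx' hy hx'0 hy0)).trans_eq ?_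
    simp only [hχ.map_mul]
    ac_rfl
  · refine (hχ.map_smul_le hD.1 _ _).trans_lt ((hχ.map_mul_lt_map_mul_right
      (hχ.mul_ne_zero hx'0 hy0) (hdrop.lt hχ hσ hx hr hx0 hr0)).trans_eq ?_)
    simp only [hχ.map_mul]
    ac_rfl
  · refine (hχ.map_smul_le hD.1 _ _).trans_lt ((hχ.map_mul_lt_map_mul_left hr0
      (hχ.map_mul_lt_map_mul_left hx0 (hdrop.lt hχ hσ hy hx' hy0 hx'0))).trans_eq ?_)
    simp only [hχ.map_mul]
    ac_rfl

theorem bracketCoeff_congr_left (hw : w ∈ B) (hx : x ∈ B) (hx' : x' ∈ B) (hy : y ∈ B)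
    (hx0 : x ≠ 0) (hy0 : y ≠ 0) (hdeg : χ x = χ x') :
    bracketCoeff K χ w r x y = bracketCoeff K χ w r x' y := by
  set g := bracketCoeff K χ w r x y
  set c := leadCoeff K χ x x'
  have hv : χ (x' - c • x) < χ x := hχ.sub_leadCoeff_smul_lt hD hx hx' hx0 hdeg.ge
  have hvy : χ (r * ((x' - c • x) * y)) < χ (r * (x * y)) :=
    hχ.map_mul_lt_map_mul_left hr0 (hχ.map_mul_lt_map_mul_right hy0 hv)
  refine (hχ.leadCoeff_eq hD.1 ?_).symm
  rw [show w * ⁅x', y⁆ - g • (r * (x' * y))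
      = c • (w * ⁅x, y⁆ - g • (r * (x * y)))
        + (w * ⁅x' - c • x, y⁆ - g • (r * ((x' - c • x) * y))) by
    simp only [Ring.lie_def, mul_sub, sub_mul, mul_smul_comm, smul_mul_assoc, smul_sub, smul_smul,
      mul_comm g c]
    abel,
    show χ (r * (x' * y)) = χ (r * (x * y)) by simp only [hχ.map_mul, hdeg]]
  refine hχ.map_add_lt ((hχ.map_smul_le hD.1 _ _).trans_lt
    (hχ.sub_bracketCoeff_smul_lt hD hdrop hwr hr hr0 hw hx hy hx0 hy0)) (hχ.map_sub_lt ?_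
    ((hχ.map_smul_le hD.1 _ _).trans_lt hvy))
  exact (hχ.map_mul_lie_le hdrop hwr (sub_mem hx' (B.smul_mem hx c)) hy).trans_lt hvy

theorem bracketCoeff_eq_zero (hσ : 0 < σ) (hw : w ∈ B) (hx : x ∈ B) (hy : y ∈ B) (hx0 : x ≠ 0)
    (hy0 : y ≠ 0) : bracketCoeff K χ w r x y = 0 :=
  ofAdd_eq_one.1 <| hχ.alternating_pairing_eq_one_of_mem hD.1
    (f := fun x y => Multiplicative.ofAdd (bracketCoeff K χ w r x y))
    (fun _ _ _ hx hx' hy hx0 hx'0 hy0 => by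
      rw [hχ.bracketCoeff_mul_left hD hdrop hwr hr hr0 hσ hw hx hx' hy hx0 hx'0 hy0, ofAdd_add])
    (fun _ _ _ hx hx' hy hx0 hy0 hdeg => by
      rw [hχ.bracketCoeff_congr_left hD hdrop hwr hr hr0 hw hx hx' hy hx0 hy0 hdeg])
    (fun _ _ hx hy hx0 hy0 => by
      rw [← ofAdd_add, hχ.bracketCoeff_add_swap hD hdrop hwr hr hr0 hσ hw hx hy hx0 hy0,
        ofAdd_zero])
    (fun _ hx0 => by rw [hχ.bracketCoeff_self hD hr0 hx0, ofAdd_zero]) hx hy hx0 hy0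

end BracketCoeff

/-- If the drop `σ` were attained at `x, y`, then `w = x * y` and `r = ⁅x, y⁆` would give
`bracketCoeff K χ w r x y = 1`, against `bracketCoeff_eq_zero`. -/
theorem commutatorDrop_succ {σ : ℕ} (hσ : 0 < σ) (hdrop : CommutatorDrop χ B σ) :
    CommutatorDrop χ B (σ + 1) := by
  intro x hx y hy
  by_contra hlt
  rw [not_le, ← hχ.map_mul] at hlt
  have hle := hdrop x hx y hy
  rw [← hχ.map_mul] at hle
  obtain ⟨c, hc⟩ : ∃ c : ℤ, χ ⁅x, y⁆ = c :=
    WithBot.ne_bot_iff_exists.1 (fun h => by simp [h] at hlt) |>.imp fun _ => Eq.symm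
  obtain ⟨n, hn⟩ : ∃ n : ℤ, χ (x * y) = n :=
    WithBot.ne_bot_iff_exists.1 (fun h => by simp [h, hc] at hle) |>.imp fun _ => Eq.symm
  have hwr : χ (x * y) = χ ⁅x, y⁆ + (σ : ℤ) := by
    rw [hc, hn] at hle hlt ⊢
    norm_cast at hle hlt ⊢
    omega
  have hxy0 : x * y ≠ 0 := fun h => by simp [h, hχ.map_zero] at hn
  have hc0 : ⁅x, y⁆ ≠ 0 := fun h => by simp [h, hχ.map_zero] at hc
  have hx0 : x ≠ 0 := by rintro rfl; simp at hxy0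
  have hy0 : y ≠ 0 := by rintro rfl; simp at hxy0
  have hone : bracketCoeff K χ (x * y) ⁅x, y⁆ x y = 1 := by
    refine hχ.leadCoeff_eq hD.1 ?_
    rw [one_smul, ← Ring.lie_def, hχ.map_mul_comm]
    exact hdrop.lt hχ hσ (mul_mem hx hy) (B.lie_mem hx hy) hxy0 hc0
  exact one_ne_zero (hone.symm.trans (hχ.bracketCoeff_eq_zero hD hdrop hwr (B.lie_mem hx hy) hc0
    hσ (mul_mem hx hy) hx hy hx0 hy0))

theorem commutatorDrop {σ : ℕ} (hσ : 0 < σ) : CommutatorDrop χ B σ := by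
  induction σ, hσ using Nat.le_induction with
  | base => exact hχ.commutatorDrop_one hD
  | succ σ hσ hdrop => exact hχ.commutatorDrop_succ hD hσ hdrop

theorem mul_comm_of_condD {x y : S} (hx : x ∈ B) (hy : y ∈ B) : x * y = y * x := by
  by_contra hne
  have hc0 : ⁅x, y⁆ ≠ 0 := by rwa [Ring.lie_def, sub_ne_zero]
  have hx0 : x ≠ 0 := by rintro rfl; simp at hne
  have hy0 : y ≠ 0 := by rintro rfl; simp at hne
  obtain ⟨n, hn⟩ := hχ.exists_eq_coe (hχ.mul_ne_zero hx0 hy0)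
  obtain ⟨c, hc⟩ := hχ.exists_eq_coe hc0
  have hc_nonneg := hD.1 _ (B.lie_mem hx hy) hc0
  have h := hχ.commutatorDrop hD (σ := n.toNat + 1) (by omega) x hx y hy
  rw [← hχ.map_mul, hn, hc] at h
  rw [hc] at hc_nonneg
  norm_cast at h hc_nonneg
  omega

end IsPseudoDegree

theorem stmt9_general {K S : Type*} [Field K] [Ring S] [Algebra K S]
    (χ : S → WithBot ℤ) (hχ : IsPseudoDegree χ)
    (a : S) (hD : CondD χ (Subalgebra.centralizer K {a}) 1) :
    ∀ b ∈ Subalgebra.centralizer K {a}, ∀ c ∈ Subalgebra.centralizer K {a},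
      b * c = c * b :=
  fun _ hb _ hc => hχ.mul_comm_of_condD hD hb hc

theorem stmt9 {K S : Type*} [Field K] [Ring S] [Algebra K S]
    (χ : S → WithBot ℤ) (hχ : IsPseudoDegree χ)
    (a : S) (m : ℕ) (hm : 0 < m) (hχa : χ a = ((m : ℤ) : WithBot ℤ))
    (hD : CondD χ (Subalgebra.centralizer K {a}) 1) :
    ∀ b ∈ Subalgebra.centralizer K {a}, ∀ c ∈ Subalgebra.centralizer K {a},
      b * c = c * b :=
  stmt9_general χ hχ a hD
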